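/- For every n : ℕ and every n-qubit Pauli index a, the size of a is encoded by the diagonal OTOCs against weight-one Pauli strings: ∑_q trace((P a)ᴴ * P q * P a * (P q)ᴴ) = (2^n : ℂ) * (3 * n - 4 * s a), where the sum runs over the 3n Pauli indices q of weight one, and s a denotes the weight of a. -/

import Mathlib

open Matrix

/-- An `n`-qubit Pauli index: a pair `(a_z, a_x)` of bit strings. -/
abbrev PauliIdx (n : ℕ) := (Fin n → ZMod 2) × (Fin n → ZMod 2)

/-- The `n`-qubit Pauli string associated with a Pauli index. -/
def P {n : ℕ} (a : PauliIdx n) :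
    Matrix (Fin n → ZMod 2) (Fin n → ZMod 2) ℂ :=
  Matrix.of fun i j => ∏ t : Fin n,
    ((if a.1 t * i t = 1 then (-1 : ℂ) else 1) * (if i t = j t + a.2 t then 1 else 0))

/-- The weight (size) of a Pauli index: the number of sites where it acts
non-trivially. -/
def pauliWeight {n : ℕ} (a : PauliIdx n) : ℕ :=
  (Finset.univ.filter fun t : Fin n => (a.1 t, a.2 t) ≠ ((0 : ZMod 2), (0 : ZMod 2))).card

/-!
Pauli strings form a projective representation of `(ZMod 2)^(2n)`: `P a * P b = ± P (a + b)`,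
each `P a` is unitary, and `P b * P a = (-1)^ω(a, b) • P a * P b` for the symplectic form `ω`.
Hence the diagonal OTOC `tr((P a)ᴴ P q P a (P q)ᴴ)` equals `(-1)^ω(a, q) 2^n`. A weight-one
`q` is a nonzero pair `p` placed at a single site `t`, and summing `(-1)^ω(a, q)` over the three
nonzero `p` gives `3` if `a` acts trivially at `t` and `-1` otherwise; summing over `t` gives
`3n - 4 s(a)`.
-/

lemma ZMod.eq_zero_or_eq_one (x : ZMod 2) : x = 0 ∨ x = 1 := by
  revert x; decide

def signChar : AddChar (ZMod 2) ℂ where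
  toFun x := if x = 1 then -1 else 1
  map_zero_eq_one' := by simp
  map_add_eq_mul' x y := by
    rcases x.eq_zero_or_eq_one with rfl | rfl <;> rcases y.eq_zero_or_eq_one with rfl | rfl <;>
      simp [ZModModule.add_self]

lemma signChar_apply (x : ZMod 2) : signChar x = if x = 1 then -1 else 1 := rfl

lemma signChar_one : signChar 1 = -1 := by simp [signChar_apply]

lemma signChar_mul_self (x : ZMod 2) : signChar x * signChar x = 1 := by
  rw [← AddChar.map_add_eq_mul, ZModModule.add_self, AddChar.map_zero_eq_one]

lemma star_signChar (x : ZMod 2) : star (signChar x) = signChar x := by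
  rw [signChar_apply]; split_ifs <;> simp

lemma signChar_dotProduct {ι : Type*} [Fintype ι] (u v : ι → ZMod 2) :
    signChar (u ⬝ᵥ v) = ∏ t, signChar (u t * v t) :=
  map_prod signChar.toMonoidHom (fun t => Multiplicative.ofAdd (u t * v t)) Finset.univ

variable {n : ℕ}

namespace PauliIdx

def symplecticForm (a b : PauliIdx n) : ZMod 2 := a.1 ⬝ᵥ b.2 + b.1 ⬝ᵥ a.2

def single (t : Fin n) (p : ZMod 2 × ZMod 2) : PauliIdx n := (Pi.single t p.1, Pi.single t p.2)

lemma single_apply (t : Fin n) (p : ZMod 2 × ZMod 2) (s : Fin n) :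
    ((single t p).1 s, (single t p).2 s) = (Pi.single t p : Fin n → ZMod 2 × ZMod 2) s := by
  by_cases h : s = t
  · subst h; simp [single]
  · simp [single, h]

lemma symplecticForm_single (a : PauliIdx n) (t : Fin n) (p : ZMod 2 × ZMod 2) :
    a.symplecticForm (single t p) = a.1 t * p.2 + p.1 * a.2 t := by
  simp [symplecticForm, single, dotProduct_single, single_dotProduct]

lemma pauliWeight_single (t : Fin n) {p : ZMod 2 × ZMod 2} (hp : p ≠ 0) :
    pauliWeight (single t p) = 1 := by
  rw [pauliWeight, Finset.card_eq_one]
  refine ⟨t, Finset.ext fun s => ?_⟩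
  by_cases h : s = t
  · subst h; simpa [single_apply, Prod.mk_zero_zero] using hp
  · simp [single_apply, Pi.single_apply, h, Prod.mk_zero_zero]

lemma eq_single_of_pauliWeight_eq_one {q : PauliIdx n} (hq : pauliWeight q = 1) :
    ∃ t, (q.1 t, q.2 t) ≠ 0 ∧ q = single t (q.1 t, q.2 t) := by
  obtain ⟨t, ht⟩ := Finset.card_eq_one.mp hq
  have hsupp (s : Fin n) : (q.1 s, q.2 s) ≠ 0 ↔ s = t := by
    simpa using Finset.ext_iff.mp ht s
  have hsite (s : Fin n) : (q.1 s, q.2 s) = ((single t (q.1 t, q.2 t)).1 s,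
      (single t (q.1 t, q.2 t)).2 s) := by
    rw [single_apply]
    by_cases h : s = t
    · subst h; simp
    · rw [Pi.single_eq_of_ne h]; simpa using mt (hsupp s).mp h
  refine ⟨t, (hsupp t).mpr rfl, Prod.ext ?_ ?_⟩
  · exact funext fun s => congrArg Prod.fst (hsite s)
  · exact funext fun s => congrArg Prod.snd (hsite s)

lemma injOn_single :
    Set.InjOn (fun x : Fin n × (ZMod 2 × ZMod 2) => single x.1 x.2) {x | x.2 ≠ 0} := by
  rintro ⟨t, p⟩ hp ⟨t', p'⟩ - h
  have hsite (s : Fin n) :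
      (Pi.single t p : Fin n → ZMod 2 × ZMod 2) s = (Pi.single t' p' : Fin n → _) s := by
    simpa only [single_apply] using congrArg (fun q : PauliIdx n => (q.1 s, q.2 s)) h
  obtain rfl : t = t' := by
    by_contra ht
    exact hp (by simpa [Pi.single_apply, ht] using hsite t)
  simpa using hsite t

lemma sum_pauliWeight_eq_one {M : Type*} [AddCommMonoid M] (f : PauliIdx n → M) :
    ∑ q with pauliWeight q = 1, f q =
      ∑ t, ∑ p : ZMod 2 × ZMod 2 with p ≠ 0, f (single t p) := by
  have himage : Finset.univ.filter (fun q : PauliIdx n => pauliWeight q = 1) =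
      (Finset.univ ×ˢ Finset.univ.filter (· ≠ 0)).image fun x => single x.1 x.2 := by
    ext q
    simp only [Finset.mem_filter, Finset.mem_univ, true_and, Finset.mem_image, Finset.mem_product]
    constructor
    · intro hq
      obtain ⟨t, hp, hq⟩ := eq_single_of_pauliWeight_eq_one hq
      exact ⟨(t, _), hp, hq.symm⟩
    · rintro ⟨⟨t, p⟩, hp, rfl⟩
      exact pauliWeight_single t hp
  rw [himage, Finset.sum_image (injOn_single.mono fun x hx => by simpa using hx),
    Finset.sum_product]

end PauliIdx

lemma P_apply (a : PauliIdx n) (i j : Fin n → ZMod 2) :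
    P a i j = if i = j + a.2 then signChar (a.1 ⬝ᵥ i) else 0 := by
  rw [signChar_dotProduct]
  simp only [P, of_apply, Finset.prod_mul_distrib, Fintype.prod_boole, ← signChar_apply,
    funext_iff, Pi.add_apply]
  split_ifs <;> simp

lemma P_zero : P (0 : PauliIdx n) = 1 := by
  ext i j
  simp [P_apply, one_apply]

lemma P_mul (a b : PauliIdx n) : P a * P b = signChar (b.1 ⬝ᵥ a.2) • P (a + b) := by
  ext i j
  simp only [mul_apply, P_apply, Matrix.smul_apply, ite_mul, zero_mul, mul_ite, mul_zero]
  rw [Finset.sum_eq_single (j + b.2)]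
  · rw [if_pos rfl, Prod.snd_add, Prod.fst_add, add_comm a.2, ← add_assoc]
    split_ifs with h
    · have hk : j + b.2 = i + a.2 := by rw [h, add_assoc, ZModModule.add_self, add_zero]
      rw [hk, dotProduct_add, add_dotProduct, AddChar.map_add_eq_mul, AddChar.map_add_eq_mul,
        smul_eq_mul]
      ring
    · simp
  · intro k _ hk; simp [hk]
  · simp

lemma P_conjTranspose (a : PauliIdx n) : (P a)ᴴ = signChar (a.1 ⬝ᵥ a.2) • P a := by
  ext i j
  simp only [conjTranspose_apply, P_apply, Matrix.smul_apply, smul_eq_mul]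
  have hij : j = i + a.2 ↔ i = j + a.2 := by
    constructor <;> rintro rfl <;> rw [add_assoc, ZModModule.add_self, add_zero]
  by_cases h : i = j + a.2
  · rw [if_pos (hij.mpr h), if_pos h, star_signChar, hij.mpr h, dotProduct_add,
      AddChar.map_add_eq_mul, mul_comm]
  · rw [if_neg (mt hij.mp h), if_neg h, star_zero, mul_zero]

lemma P_mul_self (a : PauliIdx n) : P a * P a = signChar (a.1 ⬝ᵥ a.2) • 1 := by
  rw [P_mul, ZModModule.add_self, P_zero]

lemma P_conjTranspose_mul_self (a : PauliIdx n) : (P a)ᴴ * P a = 1 := by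
  rw [P_conjTranspose, smul_mul_assoc, P_mul_self, smul_smul, signChar_mul_self, one_smul]

lemma P_mul_conjTranspose_self (a : PauliIdx n) : P a * (P a)ᴴ = 1 := by
  rw [P_conjTranspose, mul_smul_comm, P_mul_self, smul_smul, signChar_mul_self, one_smul]

lemma P_mul_comm (a b : PauliIdx n) :
    P b * P a = signChar (a.symplecticForm b) • (P a * P b) := by
  rw [P_mul, P_mul, smul_smul, PauliIdx.symplecticForm, AddChar.map_add_eq_mul, mul_assoc,
    signChar_mul_self, mul_one, add_comm]

lemma trace_P_conjTranspose_mul_mul_mul_conjTranspose (a b : PauliIdx n) :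
    ((P a)ᴴ * P b * P a * (P b)ᴴ).trace = signChar (a.symplecticForm b) * 2 ^ n := by
  rw [mul_assoc (P a)ᴴ, P_mul_comm, mul_smul_comm, ← mul_assoc, P_conjTranspose_mul_self,
    one_mul, smul_mul_assoc, P_mul_conjTranspose_self, trace_smul, trace_one, smul_eq_mul]
  simp

lemma sum_signChar_ne_zero (u v : ZMod 2) :
    ∑ p : ZMod 2 × ZMod 2 with p ≠ 0, signChar (u * p.2 + p.1 * v) =
      3 - 4 * if (u, v) ≠ 0 then 1 else 0 := by
  have hne : Finset.univ.filter (fun p : ZMod 2 × ZMod 2 => p ≠ 0) =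
      {(0, 1), (1, 0), (1, 1)} := by
    decide
  rw [hne, Finset.sum_insert (by decide), Finset.sum_pair (by decide)]
  rcases u.eq_zero_or_eq_one with rfl | rfl <;> rcases v.eq_zero_or_eq_one with rfl | rfl <;>
    simp [ZModModule.add_self, signChar_one] <;> norm_num

/-- The size of a Pauli operator is encoded by the diagonal OTOCs against
weight-one Pauli strings. -/
theorem pauli_size_from_diagonal_otocs (n : ℕ) (a : PauliIdx n) :
    ∑ q ∈ Finset.univ.filter (fun q : PauliIdx n => pauliWeight q = 1),
        ((P a)ᴴ * P q * P a * (P q)ᴴ).trace =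
      (2 ^ n : ℂ) * (3 * (n : ℂ) - 4 * (pauliWeight a : ℂ)) := by
  calc ∑ q with pauliWeight q = 1, ((P a)ᴴ * P q * P a * (P q)ᴴ).trace
      = ∑ t, ∑ p : ZMod 2 × ZMod 2 with p ≠ 0,
          signChar (a.symplecticForm (.single t p)) * 2 ^ n := by
        simp only [trace_P_conjTranspose_mul_mul_mul_conjTranspose, PauliIdx.sum_pauliWeight_eq_one]
    _ = ∑ t, (3 - 4 * if (a.1 t, a.2 t) ≠ 0 then 1 else 0) * 2 ^ n := by
        simp only [← Finset.sum_mul, PauliIdx.symplecticForm_single, sum_signChar_ne_zero]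
    _ = (2 ^ n : ℂ) * (3 * (n : ℂ) - 4 * (pauliWeight a : ℂ)) := by
        rw [← Finset.sum_mul, Finset.sum_sub_distrib, ← Finset.mul_sum, Finset.sum_boole,
          Finset.sum_const, Finset.card_univ, Fintype.card_fin, nsmul_eq_mul, pauliWeight,
          Prod.mk_zero_zero]
        ring
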